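/- Let χ : ℝⁿ → [0,1] be radially symmetric, smooth, nondecreasing in the radius, with χ = 0 on B₁(0) and χ = 1 outside B₂(0), and let 0 < β₋ < β₊ with β₊ + β₋ = n − α, 0 < α < 2 < n. Then the integral K = ∫∫_{ℝⁿ×ℝⁿ} (χ(X) − χ(Y)) / |X−Y|^{n+α} · ( |Y|^{−β₊}|X|^{−β₋} − |X|^{−β₊}|Y|^{−β₋} ) dX dY is finite and strictly positive. -/

import Mathlib

open MeasureTheory Metric Set ENNReal
set_option maxHeartbeats 1000000



lemma ball_lint {n : ℕ} (hn : 0 < n) {c : ℝ} (hc0 : 0 ≤ c) (hcn : c < n) {R : ℝ} (hR : 0 < R) :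
    ∫⁻ x in Metric.closedBall (0 : EuclideanSpace ℝ (Fin n)) R,
      ENNReal.ofReal (‖x‖ ^ (-c)) < ⊤ := by
  classical
  set μ : Measure (EuclideanSpace ℝ (Fin n)) := volume with hμ
  have hfr : Module.finrank ℝ (EuclideanSpace ℝ (Fin n)) = n := finrank_euclideanSpace_fin
  set B : ℝ≥0∞ := μ (ball (0 : EuclideanSpace ℝ (Fin n)) 1) with hB
  have hBlt : B < ⊤ := measure_ball_lt_top
  set t : ℕ → ℝ := fun k => R * (2⁻¹ : ℝ) ^ k with ht_def
  have ht : ∀ k, 0 < t k := fun k => by positivity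
  have htmono : ∀ k, t (k + 1) = t k * 2⁻¹ := fun k => by
    simp only [ht_def, pow_succ]; ring
  set A : ℕ → Set (EuclideanSpace ℝ (Fin n)) := fun k =>
    closedBall (0 : EuclideanSpace ℝ (Fin n)) (t k) \ closedBall 0 (t (k + 1)) with hA
  -- cover
  have hcover : closedBall (0 : EuclideanSpace ℝ (Fin n)) R \ {0} ⊆ ⋃ k, A k := by
    intro x hx
    obtain ⟨hx1, hx2⟩ := hx
    have hx0 : 0 < ‖x‖ := by
      simpa [norm_pos_iff] using (by simpa using hx2 : x ≠ 0)
    have hxR : ‖x‖ ≤ R := by simpa [mem_closedBall_zero_iff] using hx1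
    have hex : ∃ k : ℕ, t (k + 1) < ‖x‖ := by
      obtain ⟨m, hm⟩ := exists_pow_lt_of_lt_one (x := ‖x‖ / R) (y := (2⁻¹ : ℝ))
        (by positivity) (by norm_num)
      refine ⟨m, ?_⟩
      have : t m < ‖x‖ := by
        have := (lt_div_iff₀ hR).mp hm
        calc t m = 2⁻¹ ^ m * R := by rw [ht_def]; ring
          _ < ‖x‖ := this
      calc t (m + 1) = t m * 2⁻¹ := htmono m
        _ < t m := by nlinarith [ht m]
        _ < ‖x‖ := this
    have hk1 : t (Nat.find hex + 1) < ‖x‖ := Nat.find_spec hex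
    have hk2 : ‖x‖ ≤ t (Nat.find hex) := by
      rcases Nat.eq_zero_or_pos (Nat.find hex) with h0 | hpos
      · rw [h0]; simpa [ht_def] using hxR
      · have hlt := Nat.find_min hex (Nat.sub_lt hpos one_pos)
        have heq : Nat.find hex - 1 + 1 = Nat.find hex := by omega
        rw [heq] at hlt
        exact le_of_not_gt hlt
    exact mem_iUnion.mpr ⟨Nat.find hex, by
      simp only [hA, mem_diff, mem_closedBall_zero_iff, not_le]
      exact ⟨hk2, hk1⟩⟩
  -- reduce to union
  have h0 : μ ({0} : Set (EuclideanSpace ℝ (Fin n))) = 0 := by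
    have : ({0} : Set (EuclideanSpace ℝ (Fin n))) ⊆ closedBall 0 0 := by simp
    refine le_antisymm ?_ zero_le
    calc μ {0} ≤ μ (closedBall 0 0) := measure_mono this
      _ = ENNReal.ofReal ((0:ℝ) ^ Module.finrank ℝ (EuclideanSpace ℝ (Fin n))) * B :=
        Measure.addHaar_closedBall μ 0 le_rfl
      _ = 0 := by rw [hfr, zero_pow (by omega)]; simp
  have hsplit : (∫⁻ x in closedBall (0 : EuclideanSpace ℝ (Fin n)) R,
      ENNReal.ofReal (‖x‖ ^ (-c)) ∂μ)
      = ∫⁻ x in closedBall (0 : EuclideanSpace ℝ (Fin n)) R \ {0},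
        ENNReal.ofReal (‖x‖ ^ (-c)) ∂μ := by
    refine (setLIntegral_congr ?_).symm
    exact diff_ae_eq_self.mpr (le_antisymm (le_trans (measure_mono inter_subset_right) h0.le)
      zero_le)
  rw [hμ] at hsplit ⊢
  rw [hsplit]
  -- term bound
  have hterm : ∀ k, (∫⁻ x in A k, ENNReal.ofReal (‖x‖ ^ (-c)) ∂μ)
      ≤ (ENNReal.ofReal ((2:ℝ) ^ c * R ^ ((n:ℝ) - c)) * B) *
        (ENNReal.ofReal ((2⁻¹:ℝ) ^ ((n:ℝ) - c))) ^ k := by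
    intro k
    have hmeas : MeasurableSet (A k) :=
      (measurableSet_closedBall).diff measurableSet_closedBall
    have hpt : ∀ x ∈ A k, ENNReal.ofReal (‖x‖ ^ (-c))
        ≤ ENNReal.ofReal ((t (k+1)) ^ (-c)) := by
      intro x hx
      obtain ⟨_, hx2⟩ := hx
      have : t (k+1) < ‖x‖ := by
        simpa [mem_closedBall_zero_iff, not_le] using hx2
      exact ENNReal.ofReal_le_ofReal
        (Real.rpow_le_rpow_of_nonpos (ht _) this.le (neg_nonpos_of_nonneg hc0))
    calc (∫⁻ x in A k, ENNReal.ofReal (‖x‖ ^ (-c)) ∂μ)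
        ≤ ∫⁻ _x in A k, ENNReal.ofReal ((t (k+1)) ^ (-c)) ∂μ := setLIntegral_mono' hmeas hpt
      _ = ENNReal.ofReal ((t (k+1)) ^ (-c)) * μ (A k) := setLIntegral_const _ _
      _ ≤ ENNReal.ofReal ((t (k+1)) ^ (-c)) * μ (closedBall 0 (t k)) := by
          gcongr; exact diff_subset
      _ = ENNReal.ofReal ((t (k+1)) ^ (-c)) * (ENNReal.ofReal ((t k) ^ n) * B) := by
          rw [Measure.addHaar_closedBall μ 0 (ht k).le, hfr]
      _ = (ENNReal.ofReal ((t (k+1)) ^ (-c) * (t k) ^ n)) * B := by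
          rw [ENNReal.ofReal_mul (by positivity), mul_assoc]
      _ ≤ (ENNReal.ofReal ((2:ℝ) ^ c * R ^ ((n:ℝ) - c) * ((2⁻¹:ℝ) ^ ((n:ℝ) - c)) ^ k)) * B := by
          refine mul_le_mul_left (ENNReal.ofReal_le_ofReal ?_) B
          · -- real computation
            have h2inv : ((2:ℝ)⁻¹) ^ (-c) = (2:ℝ) ^ c := by
              rw [Real.inv_rpow (by norm_num : (0:ℝ) ≤ 2), Real.rpow_neg (by norm_num : (0:ℝ) ≤ 2),
                inv_inv]
            have e1 : (t (k+1)) ^ (-c) = (t k) ^ (-c) * (2:ℝ) ^ c := by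
              rw [htmono, Real.mul_rpow (ht k).le (by norm_num), h2inv]
            have e2 : (t k : ℝ) ^ (n:ℕ) = (t k) ^ ((n:ℝ)) := (Real.rpow_natCast _ _).symm
            rw [e1, e2, mul_comm ((t k) ^ (-c)) _, mul_assoc, ← Real.rpow_add (ht k)]
            have e3 : (t k) ^ (-c + (n:ℝ)) = R ^ ((n:ℝ) - c) * ((2⁻¹:ℝ) ^ ((n:ℝ) - c)) ^ k := by
              rw [ht_def]
              have : -c + (n:ℝ) = (n:ℝ) - c := by ring
              rw [this, Real.mul_rpow hR.le (by positivity)]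
              congr 1
              rw [← Real.rpow_natCast (2⁻¹:ℝ) k, ← Real.rpow_mul (by norm_num : (0:ℝ) ≤ 2⁻¹),
                mul_comm, Real.rpow_mul (by norm_num : (0:ℝ) ≤ 2⁻¹), Real.rpow_natCast]
            rw [e3]; ring_nf; exact le_rfl
      _ = (ENNReal.ofReal ((2:ℝ) ^ c * R ^ ((n:ℝ) - c)) * B) *
            (ENNReal.ofReal ((2⁻¹:ℝ) ^ ((n:ℝ) - c))) ^ k := by
          rw [ENNReal.ofReal_mul (by positivity), ENNReal.ofReal_pow (by positivity)]
          ring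
  -- sum
  have hLT : (∫⁻ x in closedBall (0 : EuclideanSpace ℝ (Fin n)) R \ {0},
      ENNReal.ofReal (‖x‖ ^ (-c)) ∂μ) < ⊤ := by
    have hr1 : ENNReal.ofReal ((2⁻¹:ℝ) ^ ((n:ℝ) - c)) < 1 := by
      rw [← ENNReal.ofReal_one]
      refine ENNReal.ofReal_lt_ofReal_iff (by norm_num) |>.mpr ?_
      exact Real.rpow_lt_one (by norm_num) (by norm_num) (by
        have : c < (n:ℝ) := hcn
        linarith)
    calc (∫⁻ x in closedBall (0 : EuclideanSpace ℝ (Fin n)) R \ {0},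
        ENNReal.ofReal (‖x‖ ^ (-c)) ∂μ)
        ≤ ∫⁻ x in ⋃ k, A k, ENNReal.ofReal (‖x‖ ^ (-c)) ∂μ := lintegral_mono_set hcover
      _ ≤ ∑' k, ∫⁻ x in A k, ENNReal.ofReal (‖x‖ ^ (-c)) ∂μ := lintegral_iUnion_le _ _
      _ ≤ ∑' k, (ENNReal.ofReal ((2:ℝ) ^ c * R ^ ((n:ℝ) - c)) * B) *
            (ENNReal.ofReal ((2⁻¹:ℝ) ^ ((n:ℝ) - c))) ^ k := ENNReal.tsum_le_tsum hterm
      _ = (ENNReal.ofReal ((2:ℝ) ^ c * R ^ ((n:ℝ) - c)) * B) *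
            ∑' k, (ENNReal.ofReal ((2⁻¹:ℝ) ^ ((n:ℝ) - c))) ^ k := ENNReal.tsum_mul_left
      _ = (ENNReal.ofReal ((2:ℝ) ^ c * R ^ ((n:ℝ) - c)) * B) *
            (1 - ENNReal.ofReal ((2⁻¹:ℝ) ^ ((n:ℝ) - c)))⁻¹ := by rw [ENNReal.tsum_geometric]
      _ < ⊤ := by
          refine ENNReal.mul_lt_top (ENNReal.mul_lt_top ENNReal.ofReal_lt_top hBlt) ?_
          rw [ENNReal.inv_lt_top]
          exact tsub_pos_of_lt hr1
  exact hLT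


-- sign of the D-factor
lemma Dsign {βm βp : ℝ} (h3 : 0 < βm) (h4 : βm < βp) {s r : ℝ} (hs : 0 ≤ s) (hsr : s ≤ r) :
    r ^ (-βp) * s ^ (-βm) ≤ s ^ (-βp) * r ^ (-βm) := by
  rcases hs.eq_or_lt with h0 | hs'
  · rw [← h0, Real.zero_rpow (by linarith), Real.zero_rpow (by linarith)]
    simp
  · have hr : 0 < r := lt_of_lt_of_le hs' hsr
    have hδ : (0:ℝ) < βp - βm := by linarith
    have e1 : r ^ (-βp) = r ^ (-(βp - βm)) * r ^ (-βm) := by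
      rw [← Real.rpow_add hr]; ring_nf
    have e2 : s ^ (-βp) = s ^ (-(βp - βm)) * s ^ (-βm) := by
      rw [← Real.rpow_add hs']; ring_nf
    rw [e1, e2]
    have key : r ^ (-(βp - βm)) ≤ s ^ (-(βp - βm)) :=
      Real.rpow_le_rpow_of_nonpos hs' hsr (by linarith)
    calc r ^ (-(βp - βm)) * r ^ (-βm) * s ^ (-βm)
        ≤ s ^ (-(βp - βm)) * r ^ (-βm) * s ^ (-βm) :=
          mul_le_mul_of_nonneg_right
            (mul_le_mul_of_nonneg_right key (Real.rpow_nonneg hr.le (-βm)))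
            (Real.rpow_nonneg hs'.le (-βm))
      _ = s ^ (-(βp - βm)) * s ^ (-βm) * r ^ (-βm) := by ring

-- strict version
lemma Dpos {βm βp : ℝ} (h3 : 0 < βm) (h4 : βm < βp) {s r : ℝ} (hs : 0 < s) (hsr : s < r) :
    r ^ (-βp) * s ^ (-βm) < s ^ (-βp) * r ^ (-βm) := by
  have hr : 0 < r := lt_trans hs hsr
  have e1 : r ^ (-βp) = r ^ (-(βp - βm)) * r ^ (-βm) := by
    rw [← Real.rpow_add hr]; ring_nf
  have e2 : s ^ (-βp) = s ^ (-(βp - βm)) * s ^ (-βm) := by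
    rw [← Real.rpow_add hs]; ring_nf
  rw [e1, e2]
  have key : r ^ (-(βp - βm)) < s ^ (-(βp - βm)) :=
    Real.rpow_lt_rpow_of_neg hs hsr (by linarith)
  calc r ^ (-(βp - βm)) * r ^ (-βm) * s ^ (-βm)
      < s ^ (-(βp - βm)) * r ^ (-βm) * s ^ (-βm) :=
        mul_lt_mul_of_pos_right
          (mul_lt_mul_of_pos_right key (Real.rpow_pos_of_pos hr (-βm)))
          (Real.rpow_pos_of_pos hs (-βm))
    _ = s ^ (-(βp - βm)) * s ^ (-βm) * r ^ (-βm) := by ring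

-- crude bound via min power: a^(-βp) * b^(-βm) ≤ a^(α-n) + b^(α-n)
lemma Dcrude {n : ℕ} {α βm βp : ℝ} (h3 : 0 < βm) (h4 : βm < βp) (h5 : βm + βp = n - α)
    {a b : ℝ} (ha : 0 ≤ a) (hb : 0 ≤ b) :
    a ^ (-βp) * b ^ (-βm) ≤ a ^ (α - n) + b ^ (α - n) := by
  have hana : ∀ x : ℝ, 0 ≤ x → 0 ≤ x ^ (α - (n:ℝ)) := fun x hx => Real.rpow_nonneg hx _
  rcases eq_or_lt_of_le ha with h0 | ha'
  · rw [← h0, Real.zero_rpow (by intro h; nlinarith)]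
    have := hana b hb
    simp only [zero_mul]
    positivity
  rcases eq_or_lt_of_le hb with h0 | hb'
  · rw [← h0, Real.zero_rpow (by intro h; nlinarith)]
    have := hana a ha
    simp only [mul_zero]
    positivity
  rcases le_total a b with hab | hab
  · have : b ^ (-βm) ≤ a ^ (-βm) :=
      Real.rpow_le_rpow_of_nonpos ha' hab (by linarith)
    calc a ^ (-βp) * b ^ (-βm) ≤ a ^ (-βp) * a ^ (-βm) := by
          have := Real.rpow_nonneg ha (-βp); nlinarith
      _ = a ^ (α - (n:ℝ)) := by
          rw [← Real.rpow_add ha']; congr 1; linarith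
      _ ≤ a ^ (α - n) + b ^ (α - n) := by have := hana b hb; linarith
  · have : a ^ (-βp) ≤ b ^ (-βp) :=
      Real.rpow_le_rpow_of_nonpos hb' hab (by linarith)
    calc a ^ (-βp) * b ^ (-βm) ≤ b ^ (-βp) * b ^ (-βm) := by
          have := Real.rpow_nonneg hb (-βm); nlinarith
      _ = b ^ (α - (n:ℝ)) := by
          rw [← Real.rpow_add hb']; congr 1; linarith
      _ ≤ a ^ (α - n) + b ^ (α - n) := by have := hana a ha; linarith


-- Lipschitz bound for t ↦ t^(-β) on [1/2, 4]
lemma rpow_lip {β : ℝ} (hβ : 0 < β) {r s : ℝ} (hr : r ∈ Set.Icc (2⁻¹:ℝ) 4)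
    (hs : s ∈ Set.Icc (2⁻¹:ℝ) 4) :
    |r ^ (-β) - s ^ (-β)| ≤ (β * (2:ℝ) ^ (β + 1)) * |r - s| := by
  have hderiv : ∀ x ∈ Set.Icc (2⁻¹:ℝ) 4,
      HasDerivWithinAt (fun t : ℝ => t ^ (-β)) (-β * x ^ (-β - 1)) (Set.Icc (2⁻¹:ℝ) 4) x := by
    intro x hx
    have hx0 : x ≠ 0 := by have := hx.1; intro h; rw [h] at this; norm_num at this
    exact (Real.hasDerivAt_rpow_const (Or.inl hx0)).hasDerivWithinAt
  have hbound : ∀ x ∈ Set.Icc (2⁻¹:ℝ) 4, ‖-β * x ^ (-β - 1)‖ ≤ β * (2:ℝ) ^ (β + 1) := by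
    intro x hx
    have hx0 : (0:ℝ) < x := lt_of_lt_of_le (by norm_num) hx.1
    rw [Real.norm_eq_abs, abs_mul, abs_neg, abs_of_pos hβ,
      abs_of_pos (Real.rpow_pos_of_pos hx0 _)]
    have : x ^ (-β - 1) ≤ (2⁻¹:ℝ) ^ (-β - 1) :=
      Real.rpow_le_rpow_of_nonpos (by norm_num) hx.1 (by linarith)
    have h2 : ((2:ℝ)⁻¹) ^ (-β - 1) = (2:ℝ) ^ (β + 1) := by
      rw [Real.inv_rpow (by norm_num : (0:ℝ) ≤ 2), ← Real.rpow_neg (by norm_num : (0:ℝ) ≤ 2)]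
      rw [neg_sub' ]
      ring_nf
    nlinarith
  have := Convex.norm_image_sub_le_of_norm_hasDerivWithin_le hderiv hbound
    (convex_Icc _ _) hs hr
  rw [Real.norm_eq_abs, Real.norm_eq_abs] at this
  exact this

-- Lipschitz bound for the D-factor on [1/2,4]²
lemma Dlip {βm βp : ℝ} (hm : 0 < βm) (hp : 0 < βp) {r s : ℝ}
    (hr : r ∈ Set.Icc (2⁻¹:ℝ) 4) (hs : s ∈ Set.Icc (2⁻¹:ℝ) 4) :
    |s ^ (-βp) * r ^ (-βm) - r ^ (-βp) * s ^ (-βm)|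
      ≤ ((βp * (2:ℝ) ^ (βp + 1)) * (2:ℝ) ^ βm + (2:ℝ) ^ βp * (βm * (2:ℝ) ^ (βm + 1)))
        * |r - s| := by
  have hr0 : (0:ℝ) < r := lt_of_lt_of_le (by norm_num) hr.1
  have hs0 : (0:ℝ) < s := lt_of_lt_of_le (by norm_num) hs.1
  have hbm : ∀ x : ℝ, x ∈ Set.Icc (2⁻¹:ℝ) 4 → x ^ (-βm) ≤ (2:ℝ) ^ βm := by
    intro x hx
    have : x ^ (-βm) ≤ (2⁻¹:ℝ) ^ (-βm) :=
      Real.rpow_le_rpow_of_nonpos (by norm_num) hx.1 (by linarith)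
    have h2 : ((2:ℝ)⁻¹) ^ (-βm) = (2:ℝ) ^ βm := by
      rw [Real.inv_rpow (by norm_num : (0:ℝ) ≤ 2), ← Real.rpow_neg (by norm_num : (0:ℝ) ≤ 2)]
      norm_num
    linarith [this, h2.le]
  have hbp : ∀ x : ℝ, x ∈ Set.Icc (2⁻¹:ℝ) 4 → x ^ (-βp) ≤ (2:ℝ) ^ βp := by
    intro x hx
    have : x ^ (-βp) ≤ (2⁻¹:ℝ) ^ (-βp) :=
      Real.rpow_le_rpow_of_nonpos (by norm_num) hx.1 (by linarith)
    have h2 : ((2:ℝ)⁻¹) ^ (-βp) = (2:ℝ) ^ βp := by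
      rw [Real.inv_rpow (by norm_num : (0:ℝ) ≤ 2), ← Real.rpow_neg (by norm_num : (0:ℝ) ≤ 2)]
      norm_num
    linarith [this, h2.le]
  have key : s ^ (-βp) * r ^ (-βm) - r ^ (-βp) * s ^ (-βm)
      = (s ^ (-βp) - r ^ (-βp)) * r ^ (-βm) + r ^ (-βp) * (r ^ (-βm) - s ^ (-βm)) := by ring
  rw [key]
  calc |(s ^ (-βp) - r ^ (-βp)) * r ^ (-βm) + r ^ (-βp) * (r ^ (-βm) - s ^ (-βm))|
      ≤ |(s ^ (-βp) - r ^ (-βp)) * r ^ (-βm)| + |r ^ (-βp) * (r ^ (-βm) - s ^ (-βm))| :=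
        abs_add_le _ _
    _ = |s ^ (-βp) - r ^ (-βp)| * r ^ (-βm) + r ^ (-βp) * |r ^ (-βm) - s ^ (-βm)| := by
        rw [abs_mul, abs_mul, abs_of_pos (Real.rpow_pos_of_pos hr0 _),
          abs_of_pos (Real.rpow_pos_of_pos hr0 _)]
    _ ≤ ((βp * (2:ℝ) ^ (βp + 1)) * |s - r|) * (2:ℝ) ^ βm
        + (2:ℝ) ^ βp * ((βm * (2:ℝ) ^ (βm + 1)) * |r - s|) := by
        have h1 := rpow_lip hp hs hr
        have h2 := rpow_lip hm hr hs
        have h3 := hbm r hr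
        have h4 := hbp r hr
        have n1 : (0:ℝ) ≤ r ^ (-βm) := (Real.rpow_pos_of_pos hr0 _).le
        have n2 : (0:ℝ) ≤ r ^ (-βp) := (Real.rpow_pos_of_pos hr0 _).le
        have n3 : (0:ℝ) ≤ |s ^ (-βp) - r ^ (-βp)| := abs_nonneg _
        have n4 : (0:ℝ) ≤ |r ^ (-βm) - s ^ (-βm)| := abs_nonneg _
        have n5 : (0:ℝ) < (2:ℝ) ^ βm := Real.rpow_pos_of_pos (by norm_num) _
        have n6 : (0:ℝ) < (2:ℝ) ^ βp := Real.rpow_pos_of_pos (by norm_num) _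
        have n7 : (0:ℝ) ≤ |s - r| := abs_nonneg _
        nlinarith
    _ = ((βp * (2:ℝ) ^ (βp + 1)) * (2:ℝ) ^ βm + (2:ℝ) ^ βp * (βm * (2:ℝ) ^ (βm + 1)))
        * |r - s| := by rw [abs_sub_comm s r]; ring

-- Lipschitz bound for χ on a closed ball
lemma chi_lip {n : ℕ} {χ : EuclideanSpace ℝ (Fin n) → ℝ} (hsmooth : ContDiff ℝ (⊤ : ℕ∞) χ) :
    ∃ L : ℝ, 0 ≤ L ∧ ∀ x y : EuclideanSpace ℝ (Fin n),
      x ∈ closedBall (0 : EuclideanSpace ℝ (Fin n)) 4 → y ∈ closedBall (0:EuclideanSpace ℝ (Fin n)) 4 →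
      |χ x - χ y| ≤ L * ‖x - y‖ := by
  have hcont : ContinuousOn (fun x => ‖fderiv ℝ χ x‖) (closedBall (0:EuclideanSpace ℝ (Fin n)) 4) :=
    ((hsmooth.continuous_fderiv (by norm_num)).norm).continuousOn
  obtain ⟨C, hC⟩ := (isCompact_closedBall (0:EuclideanSpace ℝ (Fin n)) 4).exists_bound_of_continuousOn hcont
  refine ⟨max C 0, le_max_right _ _, fun x y hx hy => ?_⟩
  have hdiff : ∀ z ∈ closedBall (0:EuclideanSpace ℝ (Fin n)) 4, DifferentiableAt ℝ χ z :=
    fun z _ => hsmooth.differentiable (by norm_num) z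
  have hbd : ∀ z ∈ closedBall (0:EuclideanSpace ℝ (Fin n)) 4, ‖fderiv ℝ χ z‖ ≤ max C 0 :=
    fun z hz => le_trans (le_of_eq (norm_norm _).symm |>.trans (hC z hz)) (le_max_left _ _)
  have := Convex.norm_image_sub_le_of_norm_fderiv_le hdiff hbd
    (convex_closedBall _ _) hy hx
  rwa [Real.norm_eq_abs] at this

-- uniform bound for integrals of ‖x‖^(-c) over translated balls of radius 2
lemma Qlem {n : ℕ} (hn : 0 < n) {c : ℝ} (hc0 : 0 ≤ c) (hcn : c < n) :
    ∃ K : ℝ≥0∞, K < ⊤ ∧ ∀ w : EuclideanSpace ℝ (Fin n),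
      ∫⁻ x in closedBall w 2, ENNReal.ofReal (‖x‖ ^ (-c)) ≤ K := by
  set E := EuclideanSpace ℝ (Fin n)
  set K : ℝ≥0∞ := (∫⁻ x in closedBall (0:E) 2, ENNReal.ofReal (‖x‖ ^ (-c)))
    + ENNReal.ofReal ((2:ℝ) ^ (-c)) * volume (closedBall (0:E) 2) with hK
  have hvol : ∀ w : E, volume (closedBall w 2) = volume (closedBall (0:E) 2) := by
    intro w
    rw [Measure.addHaar_closedBall volume w (by norm_num : (0:ℝ) ≤ 2),
      Measure.addHaar_closedBall volume 0 (by norm_num : (0:ℝ) ≤ 2)]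
  refine ⟨K, ?_, fun w => ?_⟩
  · exact ENNReal.add_lt_top.mpr ⟨ball_lint hn hc0 hcn (by norm_num), ENNReal.mul_lt_top
      ENNReal.ofReal_lt_top measure_closedBall_lt_top⟩
  · have hsub : closedBall w 2 ⊆ closedBall (0:E) 2 ∪ (closedBall w 2 \ closedBall (0:E) 2) := by
      intro x hx
      by_cases h : x ∈ closedBall (0:E) 2
      · exact Or.inl h
      · exact Or.inr ⟨hx, h⟩
    calc (∫⁻ x in closedBall w 2, ENNReal.ofReal (‖x‖ ^ (-c)))
        ≤ ∫⁻ x in closedBall (0:E) 2 ∪ (closedBall w 2 \ closedBall (0:E) 2),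
            ENNReal.ofReal (‖x‖ ^ (-c)) := lintegral_mono_set hsub
      _ ≤ (∫⁻ x in closedBall (0:E) 2, ENNReal.ofReal (‖x‖ ^ (-c)))
          + ∫⁻ x in closedBall w 2 \ closedBall (0:E) 2, ENNReal.ofReal (‖x‖ ^ (-c)) :=
            lintegral_union_le _ _ _
      _ ≤ K := by
          rw [hK]
          gcongr
          have hpt : ∀ x ∈ closedBall w 2 \ closedBall (0:E) 2,
              ENNReal.ofReal (‖x‖ ^ (-c)) ≤ ENNReal.ofReal ((2:ℝ) ^ (-c)) := by
            intro x hx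
            have : (2:ℝ) < ‖x‖ := by
              simpa [mem_closedBall_zero_iff, not_le] using hx.2
            exact ENNReal.ofReal_le_ofReal
              (Real.rpow_le_rpow_of_nonpos (by norm_num) this.le
                (neg_nonpos_of_nonneg hc0))
          calc (∫⁻ x in closedBall w 2 \ closedBall (0:E) 2, ENNReal.ofReal (‖x‖ ^ (-c)))
              ≤ ∫⁻ _x in closedBall w 2 \ closedBall (0:E) 2,
                  ENNReal.ofReal ((2:ℝ) ^ (-c)) :=
                setLIntegral_mono' (measurableSet_closedBall.diff measurableSet_closedBall) hpt
            _ = ENNReal.ofReal ((2:ℝ) ^ (-c)) * volume (closedBall w 2 \ closedBall (0:E) 2) :=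
                setLIntegral_const _ _
            _ ≤ ENNReal.ofReal ((2:ℝ) ^ (-c)) * volume (closedBall w 2) := by
                gcongr; exact diff_subset
            _ = ENNReal.ofReal ((2:ℝ) ^ (-c)) * volume (closedBall (0:E) 2) := by rw [hvol]

theorem stmt_19 (n : ℕ) (α βm βp : ℝ) (hα0 : 0 < α) (hα2 : α < 2) (hn : 2 < (n : ℝ))
    (h3 : 0 < βm) (h4 : βm < βp) (h5 : βm + βp = n - α) (h6 : 2 * βp < n)
    (χ : EuclideanSpace ℝ (Fin n) → ℝ)
    (hsmooth : ContDiff ℝ (⊤ : ℕ∞) χ)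
    (hrange : ∀ x, χ x ∈ Set.Icc (0 : ℝ) 1)
    (hradial : ∀ x y, ‖x‖ = ‖y‖ → χ x = χ y)
    (hmono : ∀ x y, ‖x‖ ≤ ‖y‖ → χ x ≤ χ y)
    (hin : ∀ x, ‖x‖ ≤ 1 → χ x = 0)
    (hout : ∀ x, 2 ≤ ‖x‖ → χ x = 1) :
    MeasureTheory.Integrable
      (fun P : EuclideanSpace ℝ (Fin n) × EuclideanSpace ℝ (Fin n) =>
        (χ P.1 - χ P.2) / ‖P.1 - P.2‖ ^ ((n : ℝ) + α) *
          (‖P.2‖ ^ (-βp) * ‖P.1‖ ^ (-βm) - ‖P.1‖ ^ (-βp) * ‖P.2‖ ^ (-βm))) ∧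
    0 < ∫ P : EuclideanSpace ℝ (Fin n) × EuclideanSpace ℝ (Fin n),
        (χ P.1 - χ P.2) / ‖P.1 - P.2‖ ^ ((n : ℝ) + α) *
          (‖P.2‖ ^ (-βp) * ‖P.1‖ ^ (-βm) - ‖P.1‖ ^ (-βp) * ‖P.2‖ ^ (-βm)) := by
  classical
  have hnn : 0 < n := by exact_mod_cast (by linarith : (0:ℝ) < (n:ℝ))
  have hn2 : 2 < n := by exact_mod_cast hn
  set f : EuclideanSpace ℝ (Fin n) × EuclideanSpace ℝ (Fin n) → ℝ := fun P =>
    (χ P.1 - χ P.2) / ‖P.1 - P.2‖ ^ ((n : ℝ) + α) *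
      (‖P.2‖ ^ (-βp) * ‖P.1‖ ^ (-βm) - ‖P.1‖ ^ (-βp) * ‖P.2‖ ^ (-βm)) with hf
  have hχcont : Continuous χ := hsmooth.continuous
  have hfmeas : Measurable f := by
    apply Measurable.mul
    · apply Measurable.div
      · exact (hχcont.comp continuous_fst).measurable.sub
          (hχcont.comp continuous_snd).measurable
      · fun_prop
    · fun_prop
  -- nonnegativity
  have hfnn : ∀ P : EuclideanSpace ℝ (Fin n) × EuclideanSpace ℝ (Fin n), 0 ≤ f P := by
    rintro ⟨X, Y⟩
    simp only [hf]
    rcases le_total ‖Y‖ ‖X‖ with hc | hc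
    · apply mul_nonneg
      · apply div_nonneg
        · exact sub_nonneg.mpr (hmono _ _ hc)
        · exact Real.rpow_nonneg (norm_nonneg _) _
      · exact sub_nonneg.mpr (Dsign h3 h4 (norm_nonneg Y) hc)
    · have hA : (χ X - χ Y) / ‖X - Y‖ ^ ((n : ℝ) + α) ≤ 0 := by
        apply div_nonpos_of_nonpos_of_nonneg
        · exact sub_nonpos.mpr (hmono _ _ hc)
        · exact Real.rpow_nonneg (norm_nonneg _) _
      have hB : ‖Y‖ ^ (-βp) * ‖X‖ ^ (-βm) - ‖X‖ ^ (-βp) * ‖Y‖ ^ (-βm) ≤ 0 :=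
        sub_nonpos.mpr (Dsign h3 h4 (norm_nonneg X) hc)
      nlinarith [mul_nonneg (neg_nonneg.mpr hA) (neg_nonneg.mpr hB)]
  -- vanishing
  have hv_in : ∀ X Y : EuclideanSpace ℝ (Fin n), ‖X‖ ≤ 1 → ‖Y‖ ≤ 1 → f (X, Y) = 0 := by
    intro X Y h1 h2
    simp only [hf, hin _ h1, hin _ h2, sub_self, zero_div, zero_mul]
  have hv_out : ∀ X Y : EuclideanSpace ℝ (Fin n), 2 ≤ ‖X‖ → 2 ≤ ‖Y‖ → f (X, Y) = 0 := by
    intro X Y h1 h2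
    simp only [hf, hout _ h1, hout _ h2, sub_self, zero_div, zero_mul]
  -- Lipschitz data
  obtain ⟨L, hL0, hLip⟩ := chi_lip hsmooth
  set C2 : ℝ := (βp * (2:ℝ) ^ (βp + 1)) * (2:ℝ) ^ βm + (2:ℝ) ^ βp * (βm * (2:ℝ) ^ (βm + 1))
    with hC2
  have hC2nn : 0 ≤ C2 := by
    have n1 : (0:ℝ) < (2:ℝ) ^ βm := Real.rpow_pos_of_pos (by norm_num) _
    have n2 : (0:ℝ) < (2:ℝ) ^ βp := Real.rpow_pos_of_pos (by norm_num) _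
    have n3 : (0:ℝ) < (2:ℝ) ^ (βm+1) := Real.rpow_pos_of_pos (by norm_num) _
    have n4 : (0:ℝ) < (2:ℝ) ^ (βp+1) := Real.rpow_pos_of_pos (by norm_num) _
    have hp0 : (0:ℝ) ≤ βp := le_of_lt (lt_trans h3 h4)
    rw [hC2]
    exact add_nonneg (mul_nonneg (mul_nonneg hp0 n4.le) n1.le)
      (mul_nonneg n2.le (mul_nonneg h3.le n3.le))
  set Csm : ℝ := L * C2 with hCsm
  have hCsmnn : 0 ≤ Csm := mul_nonneg hL0 hC2nn
  -- small-displacement pointwise bound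
  have hsmall : ∀ Z : EuclideanSpace ℝ (Fin n), 0 < ‖Z‖ → ‖Z‖ ≤ 2⁻¹ →
      ∀ X : EuclideanSpace ℝ (Fin n), ENNReal.ofReal (f (X, X + Z))
        ≤ (closedBall (0 : EuclideanSpace ℝ (Fin n)) 3).indicator
            (fun _ => ENNReal.ofReal (Csm * ‖Z‖ ^ (2 - (n:ℝ) - α))) X := by
    intro Z hZ0 hZhalf X
    have hnormZ : ‖X - (X + Z)‖ = ‖Z‖ := by
      have : X - (X + Z) = -Z := by abel
      rw [this, norm_neg]
    by_cases hX3 : X ∈ closedBall (0 : EuclideanSpace ℝ (Fin n)) 3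
    · rw [Set.indicator_of_mem hX3]
      have hX3' : ‖X‖ ≤ 3 := by simpa [mem_closedBall_zero_iff] using hX3
      apply ENNReal.ofReal_le_ofReal
      by_cases hXb : 2⁻¹ ≤ ‖X‖ ∧ 2⁻¹ ≤ ‖X + Z‖
      · -- main Lipschitz regime
        obtain ⟨hb1, hb2⟩ := hXb
        have hXZ4 : ‖X + Z‖ ≤ 4 := by
          calc ‖X + Z‖ ≤ ‖X‖ + ‖Z‖ := norm_add_le _ _
            _ ≤ 3 + 2⁻¹ := by linarith
            _ ≤ 4 := by norm_num
        have hrI : ‖X‖ ∈ Set.Icc (2⁻¹:ℝ) 4 := ⟨hb1, by linarith⟩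
        have hsI : ‖X + Z‖ ∈ Set.Icc (2⁻¹:ℝ) 4 := ⟨hb2, hXZ4⟩
        have hχbd : |χ X - χ (X + Z)| ≤ L * ‖Z‖ := by
          have := hLip X (X + Z) (by simpa [mem_closedBall_zero_iff] using le_trans hX3' (by norm_num))
            (by simpa [mem_closedBall_zero_iff] using hXZ4)
          rwa [hnormZ] at this
        have hDbd : |‖X + Z‖ ^ (-βp) * ‖X‖ ^ (-βm) - ‖X‖ ^ (-βp) * ‖X + Z‖ ^ (-βm)|
            ≤ C2 * ‖Z‖ := by
          have h1 := Dlip h3 (lt_trans h3 h4) hrI hsI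
          have h2 : |‖X‖ - ‖X + Z‖| ≤ ‖Z‖ := by
            have := abs_norm_sub_norm_le X (X + Z)
            rwa [hnormZ] at this
          calc |‖X + Z‖ ^ (-βp) * ‖X‖ ^ (-βm) - ‖X‖ ^ (-βp) * ‖X + Z‖ ^ (-βm)|
              ≤ C2 * |‖X‖ - ‖X + Z‖| := h1
            _ ≤ C2 * ‖Z‖ := by nlinarith
        have habs : f (X, X + Z) ≤ |χ X - χ (X + Z)|
            * |‖X + Z‖ ^ (-βp) * ‖X‖ ^ (-βm) - ‖X‖ ^ (-βp) * ‖X + Z‖ ^ (-βm)|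
            * (‖Z‖ ^ ((n:ℝ) + α))⁻¹ := by
          calc f (X, X + Z) ≤ |f (X, X + Z)| := le_abs_self _
            _ = |χ X - χ (X + Z)|
                * |‖X + Z‖ ^ (-βp) * ‖X‖ ^ (-βm) - ‖X‖ ^ (-βp) * ‖X + Z‖ ^ (-βm)|
                * (‖Z‖ ^ ((n:ℝ) + α))⁻¹ := by
              simp only [hf, hnormZ]
              rw [abs_mul, abs_div, abs_of_nonneg (Real.rpow_nonneg (norm_nonneg Z) _)]
              ring
        have hZpow : (0:ℝ) < ‖Z‖ ^ ((n:ℝ) + α) := Real.rpow_pos_of_pos hZ0 _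
        have hfinal : |χ X - χ (X + Z)|
            * |‖X + Z‖ ^ (-βp) * ‖X‖ ^ (-βm) - ‖X‖ ^ (-βp) * ‖X + Z‖ ^ (-βm)|
            * (‖Z‖ ^ ((n:ℝ) + α))⁻¹ ≤ (L * ‖Z‖) * (C2 * ‖Z‖) * (‖Z‖ ^ ((n:ℝ) + α))⁻¹ := by
          have hinv : (0:ℝ) ≤ (‖Z‖ ^ ((n:ℝ) + α))⁻¹ := by positivity
          apply mul_le_mul_of_nonneg_right _ hinv
          exact mul_le_mul hχbd hDbd (abs_nonneg _) (by positivity)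
        have hrpow : (L * ‖Z‖) * (C2 * ‖Z‖) * (‖Z‖ ^ ((n:ℝ) + α))⁻¹
            = Csm * ‖Z‖ ^ (2 - (n:ℝ) - α) := by
          have e1 : ‖Z‖ ^ (2 - (n:ℝ) - α) = ‖Z‖ ^ (2:ℝ) * (‖Z‖ ^ ((n:ℝ) + α))⁻¹ := by
            rw [show (2 - (n:ℝ) - α) = 2 + (-((n:ℝ) + α)) by ring, Real.rpow_add hZ0,
              Real.rpow_neg (norm_nonneg _)]
          have e2 : ‖Z‖ ^ (2:ℝ) = ‖Z‖ * ‖Z‖ := by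
            rw [show ((2:ℝ)) = ((2:ℕ):ℝ) by norm_num, Real.rpow_natCast, pow_two]
          rw [e1, e2, hCsm]; ring
        calc f (X, X + Z) ≤ _ := habs
          _ ≤ (L * ‖Z‖) * (C2 * ‖Z‖) * (‖Z‖ ^ ((n:ℝ) + α))⁻¹ := hfinal
          _ = Csm * ‖Z‖ ^ (2 - (n:ℝ) - α) := hrpow
      · -- both small: f vanishes
        have hzero : f (X, X + Z) = 0 := by
          rcases not_and_or.mp hXb with h | h
          · push_neg at h
            apply hv_in
            · linarith
            · calc ‖X + Z‖ ≤ ‖X‖ + ‖Z‖ := norm_add_le _ _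
                _ ≤ 1 := by linarith [hZhalf]; 
          · push_neg at h
            apply hv_in
            · calc ‖X‖ = ‖X + Z - Z‖ := by rw [add_sub_cancel_right]
                _ ≤ ‖X + Z‖ + ‖Z‖ := norm_sub_le _ _
                _ ≤ 1 := by linarith
            · linarith
        rw [hzero]
        positivity
    · rw [Set.indicator_of_notMem hX3]
      have hX3' : 3 < ‖X‖ := by
        simpa [mem_closedBall_zero_iff, not_le] using hX3
      have hzero : f (X, X + Z) = 0 := by
        apply hv_out
        · linarith
        · calc (2:ℝ) ≤ 3 - 2⁻¹ := by norm_num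
            _ ≤ ‖X‖ - ‖Z‖ := by linarith
            _ ≤ ‖X + Z‖ := by
              have := norm_sub_le (X + Z) Z
              have h2 : ‖X + Z - Z‖ = ‖X‖ := by rw [add_sub_cancel_right]
              linarith [norm_sub_le (X + Z) Z, h2 ▸ (le_refl ‖X + Z - Z‖)]
      rw [hzero]
      simp
  -- integrated small bound
  have hInnerSmall : ∀ Z : EuclideanSpace ℝ (Fin n), 0 < ‖Z‖ → ‖Z‖ ≤ 2⁻¹ →
      (∫⁻ X : EuclideanSpace ℝ (Fin n), ENNReal.ofReal (f (X, X + Z)))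
        ≤ ENNReal.ofReal (Csm * ‖Z‖ ^ (2 - (n:ℝ) - α))
          * volume (closedBall (0 : EuclideanSpace ℝ (Fin n)) 3) := by
    intro Z hZ0 hZhalf
    calc (∫⁻ X : EuclideanSpace ℝ (Fin n), ENNReal.ofReal (f (X, X + Z)))
        ≤ ∫⁻ X, (closedBall (0 : EuclideanSpace ℝ (Fin n)) 3).indicator
            (fun _ => ENNReal.ofReal (Csm * ‖Z‖ ^ (2 - (n:ℝ) - α))) X :=
          lintegral_mono (hsmall Z hZ0 hZhalf)
      _ = ENNReal.ofReal (Csm * ‖Z‖ ^ (2 - (n:ℝ) - α))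
          * volume (closedBall (0 : EuclideanSpace ℝ (Fin n)) 3) :=
          lintegral_indicator_const measurableSet_closedBall _
  -- uniform translated-ball bound
  obtain ⟨K, hKlt, hK⟩ := Qlem hnn (c := (n:ℝ) - α) (by linarith) (by linarith)
  have hKne : K ≠ ⊤ := hKlt.ne
  -- rewrite exponent α - n as -(n - α)
  have hexp : ∀ x : EuclideanSpace ℝ (Fin n),
      ENNReal.ofReal (‖x‖ ^ (α - (n:ℝ))) = ENNReal.ofReal (‖x‖ ^ (-((n:ℝ) - α))) := by
    intro x; rw [show α - (n:ℝ) = -((n:ℝ) - α) by ring]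
  -- large-displacement pointwise bound
  have hlarge : ∀ Z : EuclideanSpace ℝ (Fin n), 2⁻¹ < ‖Z‖ →
      ∀ X : EuclideanSpace ℝ (Fin n), ENNReal.ofReal (f (X, X + Z))
        ≤ ENNReal.ofReal (‖Z‖ ^ (-((n:ℝ) + α)))
          * ((closedBall (0 : EuclideanSpace ℝ (Fin n)) 2 ∪ closedBall (-Z) 2).indicator
              (fun X => ENNReal.ofReal (2 * (‖X‖ ^ (α - (n:ℝ)) + ‖X + Z‖ ^ (α - (n:ℝ))))) X) := by
    intro Z hZhalf X
    have hZ0 : (0:ℝ) < ‖Z‖ := lt_trans (by norm_num) hZhalf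
    have hnormZ : ‖X - (X + Z)‖ = ‖Z‖ := by
      have : X - (X + Z) = -Z := by abel
      rw [this, norm_neg]
    have hmemZ : X ∈ closedBall (-Z) 2 ↔ ‖X + Z‖ ≤ 2 := by
      rw [mem_closedBall, dist_eq_norm, sub_neg_eq_add]
    by_cases hS : X ∈ closedBall (0 : EuclideanSpace ℝ (Fin n)) 2 ∪ closedBall (-Z) 2
    · rw [Set.indicator_of_mem hS]
      rw [← ENNReal.ofReal_mul (Real.rpow_nonneg (norm_nonneg _) _)]
      apply ENNReal.ofReal_le_ofReal
      -- pointwise real bound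
      have hχbd : |χ X - χ (X + Z)| ≤ 1 := by
        obtain ⟨ha1, ha2⟩ := hrange X
        obtain ⟨hb1, hb2⟩ := hrange (X + Z)
        rw [abs_sub_le_iff]; constructor <;> linarith
      have ht1 : ‖X + Z‖ ^ (-βp) * ‖X‖ ^ (-βm)
          ≤ ‖X + Z‖ ^ (α - (n:ℝ)) + ‖X‖ ^ (α - (n:ℝ)) :=
        Dcrude h3 h4 h5 (norm_nonneg _) (norm_nonneg _)
      have ht2 : ‖X‖ ^ (-βp) * ‖X + Z‖ ^ (-βm)
          ≤ ‖X‖ ^ (α - (n:ℝ)) + ‖X + Z‖ ^ (α - (n:ℝ)) :=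
        Dcrude h3 h4 h5 (norm_nonneg _) (norm_nonneg _)
      have hDbd : |‖X + Z‖ ^ (-βp) * ‖X‖ ^ (-βm) - ‖X‖ ^ (-βp) * ‖X + Z‖ ^ (-βm)|
          ≤ 2 * (‖X‖ ^ (α - (n:ℝ)) + ‖X + Z‖ ^ (α - (n:ℝ))) := by
        have n1 : (0:ℝ) ≤ ‖X + Z‖ ^ (-βp) * ‖X‖ ^ (-βm) :=
          mul_nonneg (Real.rpow_nonneg (norm_nonneg _) _) (Real.rpow_nonneg (norm_nonneg _) _)
        have n2 : (0:ℝ) ≤ ‖X‖ ^ (-βp) * ‖X + Z‖ ^ (-βm) :=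
          mul_nonneg (Real.rpow_nonneg (norm_nonneg _) _) (Real.rpow_nonneg (norm_nonneg _) _)
        have n3 : (0:ℝ) ≤ ‖X‖ ^ (α - (n:ℝ)) := Real.rpow_nonneg (norm_nonneg _) _
        have n4 : (0:ℝ) ≤ ‖X + Z‖ ^ (α - (n:ℝ)) := Real.rpow_nonneg (norm_nonneg _) _
        rw [abs_sub_le_iff]
        constructor <;> linarith
      calc f (X, X + Z) ≤ |f (X, X + Z)| := le_abs_self _
        _ = |χ X - χ (X + Z)|
            * |‖X + Z‖ ^ (-βp) * ‖X‖ ^ (-βm) - ‖X‖ ^ (-βp) * ‖X + Z‖ ^ (-βm)|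
            * (‖Z‖ ^ ((n:ℝ) + α))⁻¹ := by
            simp only [hf, hnormZ]
            rw [abs_mul, abs_div, abs_of_nonneg (Real.rpow_nonneg (norm_nonneg Z) _)]
            ring
        _ ≤ 1 * (2 * (‖X‖ ^ (α - (n:ℝ)) + ‖X + Z‖ ^ (α - (n:ℝ)))) * (‖Z‖ ^ ((n:ℝ) + α))⁻¹ := by
            have hinv : (0:ℝ) ≤ (‖Z‖ ^ ((n:ℝ) + α))⁻¹ := by positivity
            apply mul_le_mul_of_nonneg_right _ hinv
            exact mul_le_mul hχbd hDbd (abs_nonneg _) (by norm_num)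
        _ = ‖Z‖ ^ (-((n:ℝ) + α)) * (2 * (‖X‖ ^ (α - (n:ℝ)) + ‖X + Z‖ ^ (α - (n:ℝ)))) := by
            rw [Real.rpow_neg (norm_nonneg _)]
            ring
    · rw [Set.indicator_of_notMem hS]
      have hX2 : 2 < ‖X‖ := by
        have := fun h => hS (Or.inl h)
        simpa [mem_closedBall_zero_iff, not_le] using this
      have hXZ2 : 2 < ‖X + Z‖ := by
        have := fun h => hS (Or.inr h)
        rw [hmemZ] at this
        simpa [not_le] using this
      rw [hv_out X (X + Z) hX2.le hXZ2.le]
      simp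
  -- integrated large bound
  have hInnerLarge : ∀ Z : EuclideanSpace ℝ (Fin n), 2⁻¹ < ‖Z‖ →
      (∫⁻ X : EuclideanSpace ℝ (Fin n), ENNReal.ofReal (f (X, X + Z)))
        ≤ ENNReal.ofReal (‖Z‖ ^ (-((n:ℝ) + α))) * (8 * K) := by
    intro Z hZhalf
    have htrans : ∀ w : EuclideanSpace ℝ (Fin n),
        (∫⁻ x in closedBall w 2, ENNReal.ofReal (‖x + Z‖ ^ (α - (n:ℝ)))) ≤ K := by
      intro w
      have heq : (∫⁻ x in closedBall w 2, ENNReal.ofReal (‖x + Z‖ ^ (α - (n:ℝ))))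
          = ∫⁻ x in closedBall (w + Z) 2, ENNReal.ofReal (‖x‖ ^ (α - (n:ℝ))) := by
        rw [← lintegral_indicator measurableSet_closedBall,
          ← lintegral_indicator measurableSet_closedBall]
        rw [← lintegral_add_right_eq_self (fun u => (closedBall (w + Z) 2).indicator
          (fun u => ENNReal.ofReal (‖u‖ ^ (α - (n:ℝ)))) u) Z]
        congr 1
        funext x
        have hiff : x ∈ closedBall w 2 ↔ x + Z ∈ closedBall (w + Z) 2 := by
          simp [mem_closedBall, dist_eq_norm, add_sub_add_right_eq_sub]
        by_cases hx : x ∈ closedBall w 2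
        · rw [Set.indicator_of_mem hx, Set.indicator_of_mem (hiff.mp hx)]
        · rw [Set.indicator_of_notMem hx,
            Set.indicator_of_notMem (fun h => hx (hiff.mpr h))]
      rw [heq]
      simp only [hexp]
      exact hK _
    have hdirect : ∀ w : EuclideanSpace ℝ (Fin n),
        (∫⁻ x in closedBall w 2, ENNReal.ofReal (‖x‖ ^ (α - (n:ℝ)))) ≤ K := by
      intro w
      simp only [hexp]
      exact hK _
    have hof : ∀ x : EuclideanSpace ℝ (Fin n),
        ENNReal.ofReal (2 * (‖x‖ ^ (α - (n:ℝ)) + ‖x + Z‖ ^ (α - (n:ℝ))))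
          = 2 * (ENNReal.ofReal (‖x‖ ^ (α - (n:ℝ))) + ENNReal.ofReal (‖x + Z‖ ^ (α - (n:ℝ)))) := by
      intro x
      rw [ENNReal.ofReal_mul (by norm_num : (0:ℝ) ≤ 2),
        ENNReal.ofReal_add (Real.rpow_nonneg (norm_nonneg _) _)
          (Real.rpow_nonneg (norm_nonneg _) _)]
      norm_num
    have hball : ∀ w : EuclideanSpace ℝ (Fin n),
        (∫⁻ x in closedBall w 2,
          ENNReal.ofReal (2 * (‖x‖ ^ (α - (n:ℝ)) + ‖x + Z‖ ^ (α - (n:ℝ))))) ≤ 2 * (K + K) := by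
      intro w
      calc (∫⁻ x in closedBall w 2,
            ENNReal.ofReal (2 * (‖x‖ ^ (α - (n:ℝ)) + ‖x + Z‖ ^ (α - (n:ℝ)))))
          = ∫⁻ x in closedBall w 2,
              2 * (ENNReal.ofReal (‖x‖ ^ (α - (n:ℝ)))
                + ENNReal.ofReal (‖x + Z‖ ^ (α - (n:ℝ)))) := by
            simp only [hof]
        _ = 2 * ∫⁻ x in closedBall w 2,
              (ENNReal.ofReal (‖x‖ ^ (α - (n:ℝ)))
                + ENNReal.ofReal (‖x + Z‖ ^ (α - (n:ℝ)))) :=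
            lintegral_const_mul' _ _ (by norm_num)
        _ = 2 * ((∫⁻ x in closedBall w 2, ENNReal.ofReal (‖x‖ ^ (α - (n:ℝ))))
              + ∫⁻ x in closedBall w 2, ENNReal.ofReal (‖x + Z‖ ^ (α - (n:ℝ)))) := by
            rw [lintegral_add_left (by fun_prop)]
        _ ≤ 2 * (K + K) := by
            gcongr
            · exact hdirect w
            · exact htrans w
    calc (∫⁻ X : EuclideanSpace ℝ (Fin n), ENNReal.ofReal (f (X, X + Z)))
        ≤ ∫⁻ X, ENNReal.ofReal (‖Z‖ ^ (-((n:ℝ) + α)))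
            * ((closedBall (0 : EuclideanSpace ℝ (Fin n)) 2 ∪ closedBall (-Z) 2).indicator
                (fun X => ENNReal.ofReal
                  (2 * (‖X‖ ^ (α - (n:ℝ)) + ‖X + Z‖ ^ (α - (n:ℝ))))) X) :=
          lintegral_mono (hlarge Z hZhalf)
      _ = ENNReal.ofReal (‖Z‖ ^ (-((n:ℝ) + α)))
          * ∫⁻ X, (closedBall (0 : EuclideanSpace ℝ (Fin n)) 2 ∪ closedBall (-Z) 2).indicator
              (fun X => ENNReal.ofReal
                (2 * (‖X‖ ^ (α - (n:ℝ)) + ‖X + Z‖ ^ (α - (n:ℝ))))) X :=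
          lintegral_const_mul' _ _ ENNReal.ofReal_ne_top
      _ ≤ ENNReal.ofReal (‖Z‖ ^ (-((n:ℝ) + α))) * (8 * K) := by
          gcongr
          rw [lintegral_indicator (measurableSet_closedBall.union measurableSet_closedBall)]
          calc (∫⁻ x in closedBall (0 : EuclideanSpace ℝ (Fin n)) 2 ∪ closedBall (-Z) 2,
              ENNReal.ofReal (2 * (‖x‖ ^ (α - (n:ℝ)) + ‖x + Z‖ ^ (α - (n:ℝ)))))
              ≤ (∫⁻ x in closedBall (0 : EuclideanSpace ℝ (Fin n)) 2,
                  ENNReal.ofReal (2 * (‖x‖ ^ (α - (n:ℝ)) + ‖x + Z‖ ^ (α - (n:ℝ)))))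
                + ∫⁻ x in closedBall (-Z) 2,
                  ENNReal.ofReal (2 * (‖x‖ ^ (α - (n:ℝ)) + ‖x + Z‖ ^ (α - (n:ℝ)))) :=
              lintegral_union_le _ _ _
            _ ≤ 2 * (K + K) + 2 * (K + K) := add_le_add (hball _) (hball _)
            _ = 8 * K := by ring
  -- the dominating function of Z
  set b : EuclideanSpace ℝ (Fin n) → ℝ≥0∞ := fun Z =>
    if ‖Z‖ ≤ 2⁻¹ then
      ENNReal.ofReal (Csm * ‖Z‖ ^ (2 - (n:ℝ) - α))
        * volume (closedBall (0 : EuclideanSpace ℝ (Fin n)) 3)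
    else ENNReal.ofReal (‖Z‖ ^ (-((n:ℝ) + α))) * (8 * K) with hb_def
  have hb : ∀ Z : EuclideanSpace ℝ (Fin n),
      (∫⁻ X : EuclideanSpace ℝ (Fin n), ENNReal.ofReal (f (X, X + Z))) ≤ b Z := by
    intro Z
    by_cases h1 : ‖Z‖ ≤ 2⁻¹
    · rw [hb_def]; simp only [if_pos h1]
      rcases eq_or_lt_of_le (norm_nonneg Z) with h0 | h0
    -- zero displacement
      · have hZ : Z = 0 := by rw [← norm_eq_zero]; exact h0.symm
        have : ∀ X : EuclideanSpace ℝ (Fin n), f (X, X + Z) = 0 := by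
          intro X
          rw [hZ]
          simp only [hf, add_zero, sub_self, zero_div, zero_mul]
        simp only [this, ENNReal.ofReal_zero, lintegral_zero]
        exact zero_le
      · exact hInnerSmall Z h0 h1
    · rw [hb_def]; simp only [if_neg h1]
      exact hInnerLarge Z (by push_neg at h1; exact h1)
  -- finiteness of the dominating integral
  have hbfin : (∫⁻ Z : EuclideanSpace ℝ (Fin n), b Z) < ⊤ := by
    rw [← lintegral_add_compl b
      (measurableSet_closedBall : MeasurableSet (closedBall (0 : EuclideanSpace ℝ (Fin n)) 2⁻¹))]
    refine ENNReal.add_lt_top.mpr ⟨?_, ?_⟩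
    · -- small region
      have heqb : ∀ Z ∈ closedBall (0 : EuclideanSpace ℝ (Fin n)) 2⁻¹,
          b Z = ENNReal.ofReal (Csm * ‖Z‖ ^ (2 - (n:ℝ) - α))
            * volume (closedBall (0 : EuclideanSpace ℝ (Fin n)) 3) := by
        intro Z hZ
        rw [hb_def]
        simp only [if_pos (mem_closedBall_zero_iff.mp hZ)]
      rw [setLIntegral_congr_fun measurableSet_closedBall heqb]
      rw [lintegral_mul_const' _ _ measure_closedBall_lt_top.ne]
      refine ENNReal.mul_lt_top ?_ measure_closedBall_lt_top
      have hexp2 : ∀ Z : EuclideanSpace ℝ (Fin n),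
          ENNReal.ofReal (Csm * ‖Z‖ ^ (2 - (n:ℝ) - α))
            = ENNReal.ofReal Csm * ENNReal.ofReal (‖Z‖ ^ (-((n:ℝ) + α - 2))) := by
        intro Z
        rw [show (2 - (n:ℝ) - α) = -((n:ℝ) + α - 2) by ring, ENNReal.ofReal_mul hCsmnn]
      simp only [hexp2]
      rw [lintegral_const_mul' _ _ ENNReal.ofReal_ne_top]
      refine ENNReal.mul_lt_top ENNReal.ofReal_lt_top ?_
      exact ball_lint hnn (by linarith) (by linarith) (by norm_num)
    · -- large region
      have heqb : ∀ Z ∈ (closedBall (0 : EuclideanSpace ℝ (Fin n)) 2⁻¹)ᶜ,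
          b Z = ENNReal.ofReal (‖Z‖ ^ (-((n:ℝ) + α))) * (8 * K) := by
        intro Z hZ
        rw [hb_def]
        simp only [if_neg (not_le.mpr (by simpa [mem_closedBall_zero_iff] using hZ))]
      rw [setLIntegral_congr_fun measurableSet_closedBall.compl heqb]
      rw [lintegral_mul_const' _ _ (ENNReal.mul_ne_top (by norm_num) hKne)]
      refine ENNReal.mul_lt_top ?_ (ENNReal.mul_lt_top (by norm_num) hKlt)
      -- tail integral
      have hpt : ∀ Z ∈ (closedBall (0 : EuclideanSpace ℝ (Fin n)) 2⁻¹)ᶜ,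
          ENNReal.ofReal (‖Z‖ ^ (-((n:ℝ) + α)))
            ≤ ENNReal.ofReal ((3:ℝ) ^ ((n:ℝ) + α) * (1 + ‖Z‖) ^ (-((n:ℝ) + α))) := by
        intro Z hZ
        have hZhalf : (2⁻¹:ℝ) < ‖Z‖ := by
          simpa [mem_closedBall_zero_iff, not_le] using hZ
        apply ENNReal.ofReal_le_ofReal
        have h1 : (0:ℝ) < 1 + ‖Z‖ := by positivity
        have h2 : 1 + ‖Z‖ ≤ 3 * ‖Z‖ := by linarith
        have hle : (3 * ‖Z‖) ^ (-((n:ℝ) + α)) ≤ (1 + ‖Z‖) ^ (-((n:ℝ) + α)) :=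
          Real.rpow_le_rpow_of_nonpos h1 h2 (by linarith)
        have hmul : (3 * ‖Z‖) ^ (-((n:ℝ) + α))
            = (3:ℝ) ^ (-((n:ℝ) + α)) * ‖Z‖ ^ (-((n:ℝ) + α)) :=
          Real.mul_rpow (by norm_num) (norm_nonneg _)
        have hid : (3:ℝ) ^ ((n:ℝ) + α) * (3:ℝ) ^ (-((n:ℝ) + α)) = 1 := by
          rw [← Real.rpow_add (by norm_num : (0:ℝ) < 3), add_neg_cancel, Real.rpow_zero]
        have h3pos : (0:ℝ) < (3:ℝ) ^ ((n:ℝ) + α) := Real.rpow_pos_of_pos (by norm_num) _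
        calc ‖Z‖ ^ (-((n:ℝ) + α))
            = (3:ℝ) ^ ((n:ℝ) + α) * ((3:ℝ) ^ (-((n:ℝ) + α)) * ‖Z‖ ^ (-((n:ℝ) + α))) := by
              rw [← mul_assoc, hid, one_mul]
          _ = (3:ℝ) ^ ((n:ℝ) + α) * (3 * ‖Z‖) ^ (-((n:ℝ) + α)) := by rw [hmul]
          _ ≤ (3:ℝ) ^ ((n:ℝ) + α) * (1 + ‖Z‖) ^ (-((n:ℝ) + α)) := by nlinarith
      calc (∫⁻ Z in (closedBall (0 : EuclideanSpace ℝ (Fin n)) 2⁻¹)ᶜ,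
            ENNReal.ofReal (‖Z‖ ^ (-((n:ℝ) + α))))
          ≤ ∫⁻ Z in (closedBall (0 : EuclideanSpace ℝ (Fin n)) 2⁻¹)ᶜ,
              ENNReal.ofReal ((3:ℝ) ^ ((n:ℝ) + α) * (1 + ‖Z‖) ^ (-((n:ℝ) + α))) :=
            setLIntegral_mono' measurableSet_closedBall.compl hpt
        _ ≤ ∫⁻ Z : EuclideanSpace ℝ (Fin n),
              ENNReal.ofReal ((3:ℝ) ^ ((n:ℝ) + α) * (1 + ‖Z‖) ^ (-((n:ℝ) + α))) :=
            setLIntegral_le_lintegral _ _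
        _ = ENNReal.ofReal ((3:ℝ) ^ ((n:ℝ) + α))
            * ∫⁻ Z : EuclideanSpace ℝ (Fin n),
              ENNReal.ofReal ((1 + ‖Z‖) ^ (-((n:ℝ) + α))) := by
            have : ∀ Z : EuclideanSpace ℝ (Fin n),
                ENNReal.ofReal ((3:ℝ) ^ ((n:ℝ) + α) * (1 + ‖Z‖) ^ (-((n:ℝ) + α)))
                  = ENNReal.ofReal ((3:ℝ) ^ ((n:ℝ) + α))
                    * ENNReal.ofReal ((1 + ‖Z‖) ^ (-((n:ℝ) + α))) := fun Z =>
              ENNReal.ofReal_mul (Real.rpow_pos_of_pos (by norm_num) _).le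
            simp only [this]
            exact lintegral_const_mul' _ _ ENNReal.ofReal_ne_top
        _ < ⊤ := by
            refine ENNReal.mul_lt_top ENNReal.ofReal_lt_top ?_
            apply finite_integral_one_add_norm
            rw [finrank_euclideanSpace_fin]
            linarith
  -- main finiteness
  have hFmeas : Measurable (fun p : EuclideanSpace ℝ (Fin n) × EuclideanSpace ℝ (Fin n) =>
      ENNReal.ofReal (f p)) := hfmeas.ennreal_ofReal
  have key : (∫⁻ p : EuclideanSpace ℝ (Fin n) × EuclideanSpace ℝ (Fin n),
      ENNReal.ofReal (f p)) < ⊤ := by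
    have hshear := measurePreserving_prod_add
      (volume : Measure (EuclideanSpace ℝ (Fin n))) volume
    calc (∫⁻ p : EuclideanSpace ℝ (Fin n) × EuclideanSpace ℝ (Fin n), ENNReal.ofReal (f p))
        = ∫⁻ p, ENNReal.ofReal (f p)
            ∂((volume : Measure (EuclideanSpace ℝ (Fin n))).prod volume) := by
          rw [← Measure.volume_eq_prod]
      _ = ∫⁻ p : EuclideanSpace ℝ (Fin n) × EuclideanSpace ℝ (Fin n),
            ENNReal.ofReal (f (p.1, p.1 + p.2))
            ∂((volume : Measure (EuclideanSpace ℝ (Fin n))).prod volume) :=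
          (hshear.lintegral_comp hFmeas).symm
      _ = ∫⁻ Z : EuclideanSpace ℝ (Fin n), ∫⁻ X : EuclideanSpace ℝ (Fin n),
            ENNReal.ofReal (f (X, X + Z)) :=
          lintegral_prod_symm _ ((hFmeas.comp
            (measurable_fst.prodMk (measurable_fst.add measurable_snd))).aemeasurable)
      _ ≤ ∫⁻ Z : EuclideanSpace ℝ (Fin n), b Z := lintegral_mono hb
      _ < ⊤ := hbfin
  have hInt : Integrable f := by
    refine ⟨hfmeas.aestronglyMeasurable, ?_⟩
    rw [HasFiniteIntegral, lintegral_enorm_of_nonneg hfnn]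
    exact key
  refine ⟨hInt, ?_⟩
  -- positivity
  refine (integral_pos_iff_support_of_nonneg hfnn hInt).mpr ?_
  set i : Fin n := ⟨0, hnn⟩ with hi
  set X0 : EuclideanSpace ℝ (Fin n) := EuclideanSpace.single i (3:ℝ) with hX0
  set Y0 : EuclideanSpace ℝ (Fin n) := EuclideanSpace.single i (2⁻¹:ℝ) with hY0
  have hX0n : ‖X0‖ = 3 := by
    rw [hX0, EuclideanSpace.norm_single]
    norm_num
  have hY0n : ‖Y0‖ = 2⁻¹ := by
    rw [hY0, EuclideanSpace.norm_single]
    norm_num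
  have hsub : ball X0 4⁻¹ ×ˢ ball Y0 8⁻¹ ⊆ Function.support f := by
    rintro ⟨X, Y⟩ ⟨hX, hY⟩
    have hXd : ‖X - X0‖ < 4⁻¹ := by rwa [mem_ball, dist_eq_norm] at hX
    have hYd : ‖Y - Y0‖ < 8⁻¹ := by rwa [mem_ball, dist_eq_norm] at hY
    have hXn : (11:ℝ)/4 < ‖X‖ := by
      have := norm_sub_norm_le X0 X
      have h2 : ‖X0 - X‖ = ‖X - X0‖ := norm_sub_rev _ _
      rw [h2, hX0n] at this
      linarith
    have hYlo : (3:ℝ)/8 < ‖Y‖ := by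
      have := norm_sub_norm_le Y0 Y
      have h2 : ‖Y0 - Y‖ = ‖Y - Y0‖ := norm_sub_rev _ _
      rw [h2, hY0n] at this
      linarith
    have hYhi : ‖Y‖ < (5:ℝ)/8 := by
      have := norm_sub_norm_le Y Y0
      rw [hY0n] at this
      linarith
    have hχX : χ X = 1 := hout X (by linarith)
    have hχY : χ Y = 0 := hin Y (by linarith)
    have hXYn : (0:ℝ) < ‖X - Y‖ := by
      have := norm_sub_norm_le X Y
      have h2 : ‖X‖ - ‖Y‖ ≤ ‖X - Y‖ := this
      linarith
    have hD : ‖X‖ ^ (-βp) * ‖Y‖ ^ (-βm) < ‖Y‖ ^ (-βp) * ‖X‖ ^ (-βm) :=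
      Dpos h3 h4 (by linarith) (by linarith)
    apply ne_of_gt
    simp only [hf, hχX, hχY, sub_zero]
    apply _root_.mul_pos
    · apply div_pos one_pos
      exact Real.rpow_pos_of_pos hXYn _
    · exact sub_pos.mpr hD
  calc (0:ℝ≥0∞) < volume (ball X0 4⁻¹) * volume (ball Y0 8⁻¹) := by
        refine ENNReal.mul_pos ?_ ?_
        · exact (measure_ball_pos volume X0 (by norm_num)).ne'
        · exact (measure_ball_pos volume Y0 (by norm_num)).ne'
    _ = volume (ball X0 4⁻¹ ×ˢ ball Y0 8⁻¹) := by
        rw [Measure.volume_eq_prod, Measure.prod_prod]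
    _ ≤ volume (Function.support f) := measure_mono hsub
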